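/- Let F(x) = ₂F₁(a,b;a+b;x) with a,b ∈ (0,1]. Then 1/F is concave on (0,1); in particular F((x+y)/2) ≤ 2F(x)F(y)/(F(x)+F(y)) for all x,y ∈ (0,1), with equality iff x = y. -/

import Mathlib

/-- The rising factorial (Pochhammer symbol) `(a)ₙ = a(a+1)⋯(a+n−1)`. -/
def ascFac (a : ℝ) : ℕ → ℝ
  | 0 => 1
  | n + 1 => ascFac a n * (a + n)

/-- The Gaussian hypergeometric function `₂F₁(a,b;c;x) = Σ (a)ₙ(b)ₙ/((c)ₙ n!) xⁿ`. -/
noncomputable def hyperF (a b c x : ℝ) : ℝ :=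
  ∑' n : ℕ, ascFac a n * ascFac b n / (ascFac c n * n.factorial) * x ^ n

/-!
The Taylor coefficients `Aₙ` of `F` are positive, and for `a, b ≤ 1` their ratios
`ρₙ = Aₙ₊₁ / Aₙ = (a+n)(b+n) / ((a+b+n)(n+1))` increase strictly with `n`. By Kaluza's
theorem the coefficients `eₙ` of the reciprocal series `1/F = ∑ eₙ xⁿ` then satisfy `eₙ ≤ 0`
and `|eₙ| ≤ Aₙ ≤ 1` for `n ≥ 1`. Hence on `[0, 1)` the function `1/F` is an affine function
plus nonpositive multiples of the convex powers `xⁿ`, `n ≥ 2`, and it is strictly concave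
because `e₂ = A₁² - A₂ = ρ₀ (ρ₀ - ρ₁) < 0`. Strict midpoint concavity of `1/F` is the
harmonic-mean inequality.
-/

open Finset Set

noncomputable def hyperCoeff (a b c : ℝ) (n : ℕ) : ℝ :=
  ascFac a n * ascFac b n / (ascFac c n * n.factorial)

noncomputable def hyperRatio (a b c : ℝ) (n : ℕ) : ℝ :=
  (a + n) * (b + n) / ((c + n) * (n + 1))

theorem hyperF_eq_tsum (a b c x : ℝ) : hyperF a b c x = ∑' n, hyperCoeff a b c n * x ^ n := rfl

theorem ascFac_pos {a : ℝ} (ha : 0 < a) : ∀ n, 0 < ascFac a n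
  | 0 => one_pos
  | n + 1 => mul_pos (ascFac_pos ha n) (by positivity)

theorem hyperCoeff_zero (a b c : ℝ) : hyperCoeff a b c 0 = 1 := by
  simp [hyperCoeff, ascFac]

theorem hyperCoeff_succ (a b c : ℝ) (n : ℕ) :
    hyperCoeff a b c (n + 1) = hyperCoeff a b c n * hyperRatio a b c n := by
  rw [hyperCoeff, hyperCoeff, hyperRatio, div_mul_div_comm]
  simp only [ascFac, Nat.factorial_succ]
  push_cast
  ring

theorem hyperCoeff_pos {a b c : ℝ} (ha : 0 < a) (hb : 0 < b) (hc : 0 < c) (n : ℕ) :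
    0 < hyperCoeff a b c n := by
  have := ascFac_pos ha n
  have := ascFac_pos hb n
  have := ascFac_pos hc n
  unfold hyperCoeff
  positivity

noncomputable def invCoeff (A : ℕ → ℝ) (n : ℕ) : ℝ :=
  PowerSeries.coeff n (PowerSeries.mk A)⁻¹

section InvCoeff

variable {A : ℕ → ℝ} (h0 : A 0 = 1)

include h0

theorem sum_range_mul_invCoeff (n : ℕ) :
    ∑ k ∈ range (n + 1), A k * invCoeff A (n - k) = if n = 0 then 1 else 0 := by
  have hA : PowerSeries.constantCoeff (PowerSeries.mk A) ≠ 0 := by simp [h0]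
  have h := congrArg (PowerSeries.coeff n) (PowerSeries.mul_inv_cancel _ hA)
  rw [PowerSeries.coeff_mul, PowerSeries.coeff_one,
    Finset.Nat.sum_antidiagonal_eq_sum_range_succ_mk] at h
  simpa [invCoeff] using h

theorem invCoeff_zero : invCoeff A 0 = 1 := by
  simpa [h0] using sum_range_mul_invCoeff h0 0

theorem invCoeff_one : invCoeff A 1 = -A 1 := by
  have h := sum_range_mul_invCoeff h0 1
  simp only [sum_range_succ, range_zero, sum_empty, h0, invCoeff_zero h0] at h
  norm_num at h
  linarith

theorem invCoeff_two : invCoeff A 2 = A 1 ^ 2 - A 2 := by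
  have h := sum_range_mul_invCoeff h0 2
  simp only [sum_range_succ, range_zero, sum_empty, h0, invCoeff_zero h0] at h
  norm_num [invCoeff_one h0] at h
  linarith

variable {ρ : ℕ → ℝ} (hrec : ∀ n, A (n + 1) = A n * ρ n)

include hrec

theorem invCoeff_succ_eq {N : ℕ} (hN : 1 ≤ N) :
    invCoeff A (N + 1) = -∑ i ∈ range N, A i * (ρ i - ρ N) * invCoeff A (N - i) := by
  have h1 := sum_range_mul_invCoeff h0 (N + 1)
  have h2 := sum_range_mul_invCoeff h0 N
  rw [if_neg (by omega)] at h1 h2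
  rw [sum_range_succ', sum_range_succ] at h1
  rw [sum_range_succ] at h2
  simp only [Nat.add_sub_add_right, Nat.sub_zero, Nat.sub_self, h0, one_mul, hrec N] at h1 h2
  have hsplit : ∑ i ∈ range N, A i * (ρ i - ρ N) * invCoeff A (N - i)
      = ∑ i ∈ range N, A (i + 1) * invCoeff A (N - i)
        - ρ N * ∑ i ∈ range N, A i * invCoeff A (N - i) := by
    rw [mul_sum, ← sum_sub_distrib]
    exact sum_congr rfl fun i _ => by rw [hrec]; ring
  rw [hsplit]
  linear_combination h1 - ρ N * h2

theorem invCoeff_two_neg (hρ0 : 0 < ρ 0) (hρ01 : ρ 0 < ρ 1) : invCoeff A 2 < 0 := by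
  rw [invCoeff_two h0, hrec 1, hrec 0, h0]
  nlinarith

variable (hA : ∀ n, 0 ≤ A n) (hρ : Monotone ρ)

include hA hρ

/-- Kaluza's theorem. -/
theorem invCoeff_nonpos (n : ℕ) (hn : 1 ≤ n) : invCoeff A n ≤ 0 := by
  induction n using Nat.strong_induction_on with
  | _ n ih =>
    obtain _ | _ | N := n
    · omega
    · rw [invCoeff_one h0]
      linarith [hA 1]
    rw [invCoeff_succ_eq h0 hrec (by omega : 1 ≤ N + 1), neg_nonpos]
    refine sum_nonneg fun i hi => ?_
    have hi : i < N + 1 := mem_range.mp hi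
    exact mul_nonneg_of_nonpos_of_nonpos
      (mul_nonpos_of_nonneg_of_nonpos (hA i) (sub_nonpos.mpr (hρ hi.le)))
      (ih _ (by omega) (by omega))

theorem abs_invCoeff_le (n : ℕ) : |invCoeff A n| ≤ A n := by
  obtain _ | N := n
  · rw [invCoeff_zero h0, h0, abs_one]
  rw [abs_of_nonpos (invCoeff_nonpos h0 hrec hA hρ _ (by omega))]
  have h := sum_range_mul_invCoeff h0 (N + 1)
  rw [if_neg (by omega), sum_range_succ', sum_range_succ] at h
  simp only [Nat.add_sub_add_right, Nat.sub_zero, Nat.sub_self, h0, one_mul,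
    invCoeff_zero h0, mul_one] at h
  have hrest : ∑ i ∈ range N, A (i + 1) * invCoeff A (N - i) ≤ 0 :=
    sum_nonpos fun i hi => mul_nonpos_of_nonneg_of_nonpos (hA _)
      (invCoeff_nonpos h0 hrec hA hρ _ (by have := mem_range.mp hi; omega))
  linarith

end InvCoeff

theorem summable_norm_mul_pow {c : ℕ → ℝ} (hc : ∀ n, |c n| ≤ 1) {x : ℝ} (hx : |x| < 1) :
    Summable fun n => ‖c n * x ^ n‖ := by
  refine .of_nonneg_of_le (fun n => norm_nonneg _) (fun n => ?_)
    (summable_geometric_of_lt_one (abs_nonneg x) hx)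
  rw [norm_mul, norm_pow, Real.norm_eq_abs, Real.norm_eq_abs]
  exact mul_le_of_le_one_left (by positivity) (hc n)

theorem tsum_mul_pow_mul_tsum_invCoeff_mul_pow {A : ℕ → ℝ} (h0 : A 0 = 1)
    (hA : ∀ n, |A n| ≤ 1) (hinv : ∀ n, |invCoeff A n| ≤ 1) {x : ℝ} (hx : |x| < 1) :
    (∑' n, A n * x ^ n) * ∑' n, invCoeff A n * x ^ n = 1 := by
  rw [tsum_mul_tsum_eq_tsum_sum_range_of_summable_norm (summable_norm_mul_pow hA hx)
    (summable_norm_mul_pow hinv hx)]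
  have hcoeff (n : ℕ) : ∑ k ∈ range (n + 1), A k * x ^ k * (invCoeff A (n - k) * x ^ (n - k))
      = (if n = 0 then 1 else 0) * x ^ n := by
    rw [← sum_range_mul_invCoeff h0 n, sum_mul]
    refine sum_congr rfl fun k hk => ?_
    rw [← pow_sub_mul_pow x (Nat.le_of_lt_succ (mem_range.mp hk))]
    ring
  rw [tsum_congr hcoeff, tsum_eq_single 0 fun n hn => by simp [hn]]
  simp

theorem concaveOn_tsum {E : Type*} [AddCommGroup E] [Module ℝ E] {s : Set E}
    {f : ℕ → E → ℝ} (hf : ∀ n, ConcaveOn ℝ s (f n))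
    (hsum : ∀ x ∈ s, Summable fun n => f n x) : ConcaveOn ℝ s fun x => ∑' n, f n x := by
  refine ⟨(hf 0).1, fun x hx y hy p q hp hq hpq => ?_⟩
  simp only [smul_eq_mul]
  rw [← tsum_mul_left, ← tsum_mul_left,
    ← ((hsum x hx).mul_left p).tsum_add ((hsum y hy).mul_left q)]
  exact Summable.tsum_le_tsum (fun n => (hf n).2 hx hy hp hq hpq)
    (((hsum x hx).mul_left p).add ((hsum y hy).mul_left q)) (hsum _ ((hf 0).1 hx hy hp hq hpq))

theorem concaveOn_mul_pow {d : ℝ} {n : ℕ} (hd : 2 ≤ n → d ≤ 0) :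
    ConcaveOn ℝ (Ici 0) fun x : ℝ => d * x ^ n := by
  rcases lt_or_ge n 2 with hn | hn
  · interval_cases n
    · simpa using concaveOn_const d (convex_Ici (0 : ℝ))
    · exact ((LinearMap.mulLeft ℝ d).concaveOn (convex_Ici 0)).congr fun x _ => by simp
  · exact ((convexOn_pow n).smul (neg_nonneg.mpr (hd hn))).neg.congr fun x _ => by simp

theorem concaveOn_tsum_mul_pow {d : ℕ → ℝ} (hd1 : ∀ n, |d n| ≤ 1) (hd : ∀ n, 2 ≤ n → d n ≤ 0) :
    ConcaveOn ℝ (Ico 0 1) fun x => ∑' n, d n * x ^ n :=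
  concaveOn_tsum (fun n => (concaveOn_mul_pow (hd n)).subset Ico_subset_Ici_self (convex_Ico 0 1))
    fun x hx => (summable_norm_mul_pow hd1 (abs_lt.mpr ⟨by linarith [hx.1], hx.2⟩)).of_norm

theorem strictConcaveOn_mul_sq {C : ℝ} (hC : C < 0) :
    StrictConcaveOn ℝ univ fun x : ℝ => C * x ^ 2 := by
  refine ⟨convex_univ, fun x _ y _ hxy p q hp hq hpq => ?_⟩
  have hxy : 0 < (x - y) ^ 2 := by positivity [sub_ne_zero.mpr hxy]
  simp only [smul_eq_mul]
  obtain rfl : q = 1 - p := by linarith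
  nlinarith [mul_pos (mul_pos hp hq) hxy]

theorem strictConcaveOn_tsum_mul_pow {d : ℕ → ℝ} (hd1 : ∀ n, |d n| ≤ 1)
    (hd : ∀ n, 2 ≤ n → d n ≤ 0) (hd2 : d 2 < 0) :
    StrictConcaveOn ℝ (Ico 0 1) fun x => ∑' n, d n * x ^ n := by
  set d' : ℕ → ℝ := fun n => if n = 2 then 0 else d n
  have hrest : ConcaveOn ℝ (Ico 0 1) fun x => ∑' n, d' n * x ^ n :=
    concaveOn_tsum_mul_pow (fun n => by unfold d'; split_ifs <;> simp [hd1])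
      fun n hn => by unfold d'; split_ifs <;> simp [hd n hn]
  refine (((strictConcaveOn_mul_sq hd2).subset (subset_univ _) (convex_Ico 0 1)).add_concaveOn
    hrest).congr fun x hx => ?_
  have hsum := (summable_norm_mul_pow hd1 (abs_lt.mpr ⟨by linarith [hx.1], hx.2⟩)).of_norm
  simp only [Pi.add_apply, hsum.tsum_eq_add_tsum_ite 2, d', ite_mul, zero_mul]

section ZeroBalanced

variable {a b : ℝ} (ha : 0 < a) (hb : 0 < b) (hb1 : b ≤ 1)

include ha hb hb1

theorem hyperRatio_le_one (n : ℕ) : hyperRatio a b (a + b) n ≤ 1 := by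
  rw [hyperRatio, div_le_one (by positivity)]
  nlinarith [mul_le_mul_of_nonneg_left hb1 ha.le]

theorem hyperCoeff_le_one : ∀ n, hyperCoeff a b (a + b) n ≤ 1
  | 0 => (hyperCoeff_zero a b _).le
  | n + 1 => by
    rw [hyperCoeff_succ]
    exact mul_le_one₀ (hyperCoeff_le_one n) (by unfold hyperRatio; positivity)
      (hyperRatio_le_one ha hb hb1 n)

theorem abs_hyperCoeff_le_one (n : ℕ) : |hyperCoeff a b (a + b) n| ≤ 1 := by
  rw [abs_of_pos (hyperCoeff_pos ha hb (by positivity) n)]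
  exact hyperCoeff_le_one ha hb hb1 n

theorem one_le_hyperF {x : ℝ} (hx : x ∈ Set.Ico 0 1) : 1 ≤ hyperF a b (a + b) x := by
  have hsum := (summable_norm_mul_pow (abs_hyperCoeff_le_one ha hb hb1)
    (abs_lt.mpr ⟨by linarith [hx.1], hx.2⟩)).of_norm
  rw [hyperF_eq_tsum]
  simpa [hyperCoeff_zero] using hsum.le_tsum 0 fun n _ =>
    mul_nonneg (hyperCoeff_pos ha hb (by positivity) n).le (pow_nonneg hx.1 n)

variable (ha1 : a ≤ 1)

include ha1

theorem hyperRatio_strictMono : StrictMono (hyperRatio a b (a + b)) := by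
  refine strictMono_nat_of_lt_succ fun n => ?_
  have hn : (0 : ℝ) ≤ n := n.cast_nonneg
  rw [hyperRatio, hyperRatio, div_lt_div_iff₀ (by positivity) (by positivity)]
  push_cast
  nlinarith [mul_pos ha hb, mul_nonneg (sub_nonneg.mpr ha1) (sub_nonneg.mpr hb1),
    mul_nonneg ha.le hn, mul_nonneg hb.le hn, mul_nonneg (mul_nonneg ha.le hb.le) hn]

theorem abs_invCoeff_hyperCoeff_le_one (n : ℕ) :
    |invCoeff (hyperCoeff a b (a + b)) n| ≤ 1 :=
  (abs_invCoeff_le (hyperCoeff_zero a b _) (hyperCoeff_succ a b _)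
    (fun n => (hyperCoeff_pos ha hb (by positivity) n).le)
    (hyperRatio_strictMono ha hb hb1 ha1).monotone n).trans (hyperCoeff_le_one ha hb hb1 n)

theorem one_div_hyperF_eq_tsum {x : ℝ} (hx : |x| < 1) :
    1 / hyperF a b (a + b) x = ∑' n, invCoeff (hyperCoeff a b (a + b)) n * x ^ n :=
  (eq_one_div_of_mul_eq_one_right (tsum_mul_pow_mul_tsum_invCoeff_mul_pow
    (hyperCoeff_zero a b _) (abs_hyperCoeff_le_one ha hb hb1)
    (abs_invCoeff_hyperCoeff_le_one ha hb hb1 ha1) hx)).symm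

theorem strictConcaveOn_one_div_hyperF :
    StrictConcaveOn ℝ (Ico 0 1) fun x => 1 / hyperF a b (a + b) x := by
  have hρ := hyperRatio_strictMono ha hb hb1 ha1
  have hA (n : ℕ) : 0 ≤ hyperCoeff a b (a + b) n := (hyperCoeff_pos ha hb (by positivity) n).le
  have hnonpos (n : ℕ) (hn : 2 ≤ n) : invCoeff (hyperCoeff a b (a + b)) n ≤ 0 :=
    invCoeff_nonpos (hyperCoeff_zero a b _) (hyperCoeff_succ a b _) hA hρ.monotone n (by omega)
  have htwo : invCoeff (hyperCoeff a b (a + b)) 2 < 0 :=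
    invCoeff_two_neg (hyperCoeff_zero a b _) (hyperCoeff_succ a b _)
      (by unfold hyperRatio; positivity) (hρ zero_lt_one)
  refine (strictConcaveOn_tsum_mul_pow (abs_invCoeff_hyperCoeff_le_one ha hb hb1 ha1) hnonpos
    htwo).congr fun x hx => ?_
  exact (one_div_hyperF_eq_tsum ha hb hb1 ha1 (abs_lt.mpr ⟨by linarith [hx.1], hx.2⟩)).symm

end ZeroBalanced

theorem midpoint_le_harmonicMean_of_strictConcaveOn_one_div {s : Set ℝ} {f : ℝ → ℝ}
    (hf : StrictConcaveOn ℝ s fun x => 1 / f x) (hpos : ∀ x ∈ s, 0 < f x)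
    {x y : ℝ} (hx : x ∈ s) (hy : y ∈ s) :
    f ((x + y) / 2) ≤ 2 * f x * f y / (f x + f y) ∧
      (f ((x + y) / 2) = 2 * f x * f y / (f x + f y) ↔ x = y) := by
  have hfx := hpos x hx
  have hfy := hpos y hy
  by_cases hxy : x = y
  · subst hxy
    have hmean : 2 * f x * f x / (f x + f x) = f x := by field_simp; ring
    simp [hmean]
  have hhalf : (0 : ℝ) < 1 / 2 := by norm_num
  have hsum : (1 / 2 : ℝ) + 1 / 2 = 1 := by norm_num
  have hmid := hf.2 hx hy hxy hhalf hhalf hsum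
  have hfm := hpos _ (hf.1 hx hy hhalf.le hhalf.le hsum)
  rw [show (1 / 2 : ℝ) • x + (1 / 2 : ℝ) • y = (x + y) / 2 by simp only [smul_eq_mul]; ring]
    at hmid hfm
  have hlt : f ((x + y) / 2) < 2 * f x * f y / (f x + f y) := by
    rw [← one_div_lt_one_div (by positivity) hfm, one_div_div]
    convert hmid using 1
    simp only [smul_eq_mul]
    field_simp
    ring
  exact ⟨hlt.le, iff_of_false hlt.ne hxy⟩

theorem stmt14 (a b : ℝ) (ha : a ∈ Set.Ioc (0:ℝ) 1) (hb : b ∈ Set.Ioc (0:ℝ) 1) :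
    ConcaveOn ℝ (Set.Ioo 0 1) (fun x => 1 / hyperF a b (a + b) x) ∧
      ∀ x ∈ Set.Ioo (0:ℝ) 1, ∀ y ∈ Set.Ioo (0:ℝ) 1,
        hyperF a b (a + b) ((x + y) / 2) ≤
            2 * hyperF a b (a + b) x * hyperF a b (a + b) y /
              (hyperF a b (a + b) x + hyperF a b (a + b) y) ∧
          (hyperF a b (a + b) ((x + y) / 2) =
              2 * hyperF a b (a + b) x * hyperF a b (a + b) y /
                (hyperF a b (a + b) x + hyperF a b (a + b) y) ↔ x = y) := by
  obtain ⟨ha0, ha1⟩ := ha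
  obtain ⟨hb0, hb1⟩ := hb
  have hconc := (strictConcaveOn_one_div_hyperF ha0 hb0 hb1 ha1).subset Ioo_subset_Ico_self
    (convex_Ioo 0 1)
  have hpos (z : ℝ) (hz : z ∈ Set.Ioo 0 1) : 0 < hyperF a b (a + b) z :=
    one_pos.trans_le (one_le_hyperF ha0 hb0 hb1 (Ioo_subset_Ico_self hz))
  exact ⟨hconc.concaveOn, fun x hx y hy =>
    midpoint_le_harmonicMean_of_strictConcaveOn_one_div hconc hpos hx hy⟩
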